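/- arXiv:1006.5357 — 2 statements merged into one kernel-verified Lean document; each statement's English description precedes it below -/
import Mathlib

section
/- Let S be a commutative local ring whose maximal ideal 𝔐 contains p, let G be a finite group, let C be a normal cyclic p-subgroup of G, and set G′ = G/C. Then the ring homomorphism S[G] → S[G′] induced by the projection G → G′ restricts to a surjective map on unit groups S[G]^× → S[G′]^×. -/
/-!
Lift `u` and `u⁻¹` to `x` and `y`. Then `1 - x * y` lies in the kernel, and `S[G]`, being finite
over the commutative ring `S`, is Dedekind-finite, so it suffices that `x * y` is a unit.
Let `σ` generate `C`, of order `p ^ n`. As `C` is normal, the left ideal `S[G] (σ - 1)` is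
two-sided; it contains the kernel, so every `z` in the kernel has
`z ^ p ^ n ∈ S[G] (σ - 1) ^ p ^ n ⊆ p S[G] ⊆ 𝔪 S[G]`, because
`(σ - 1) ^ p ^ n ≡ σ ^ p ^ n - 1 = 0 mod p`. Finally, `1 - z` is a unit as soon as some power
of `z` lies in `𝔪 S[G]`, by Nakayama's lemma.
-/

open MonoidAlgebra

section FiniteAlgebra

theorem Module.Finite.isDedekindFiniteMonoid (S R : Type*) [CommRing S] [Ring R] [Algebra S R]
    [Module.Finite S R] : IsDedekindFiniteMonoid R where
  mul_eq_one_symm {a b} hab := by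
    have hsurj : Function.Surjective (LinearMap.mulLeft S a) :=
      fun x => ⟨b * x, by simp [← mul_assoc, hab]⟩
    apply OrzechProperty.injective_of_surjective_endomorphism _ hsurj
    simp [← mul_assoc, hab]

variable {S R : Type*} [CommRing S] [Ring R] [Algebra S R] [Module.Finite S R]
  {I : Ideal S}

theorem isUnit_of_sub_one_mem_smul_top (hI : I ≤ Ideal.jacobson ⊥) {a : R}
    (ha : a - 1 ∈ I • (⊤ : Submodule S R)) : IsUnit a := by
  have := Module.Finite.isDedekindFiniteMonoid S R
  have hrange : LinearMap.range (LinearMap.mulLeft S a) = ⊤ := by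
    refine top_le_iff.mp (Submodule.le_of_le_smul_of_le_jacobson_bot Module.Finite.fg_top hI
      fun x _ => ?_)
    have hax : (a - 1) * x ∈ I • (⊤ : Submodule S R) := by
      have := Submodule.mem_map_of_mem (f := LinearMap.mulRight S x) ha
      rw [Submodule.map_smul''] at this
      exact Submodule.smul_mono le_rfl le_top this
    rw [show x = a * x - (a - 1) * x by noncomm_ring]
    exact Submodule.sub_mem_sup ⟨x, rfl⟩ hax
  obtain ⟨b, hb⟩ := LinearMap.range_eq_top.mp hrange 1
  exact IsUnit.of_mul_eq_one b hb

theorem isUnit_one_sub_of_pow_mem_smul_top (hI : I ≤ Ideal.jacobson ⊥) {x : R} {n : ℕ}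
    (hx : x ^ n ∈ I • (⊤ : Submodule S R)) : IsUnit (1 - x) := by
  have := Module.Finite.isDedekindFiniteMonoid S R
  refine isUnit_of_mul_isUnit_left (y := ∑ i ∈ Finset.range n, x ^ i) ?_
  rw [mul_neg_geom_sum]
  exact isUnit_of_sub_one_mem_smul_top hI (by rw [sub_sub_cancel_left]; exact neg_mem hx)

end FiniteAlgebra

theorem Ideal.pow_mem_span_singleton_pow {R : Type*} [Semiring R] {t a : R}
    (ht : ∀ r, t * r ∈ Ideal.span {t}) (ha : a ∈ Ideal.span {t}) (n : ℕ) :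
    a ^ n ∈ Ideal.span {t ^ n} := by
  induction n with
  | zero => simp
  | succ n ih =>
    obtain ⟨c, rfl⟩ := Ideal.mem_span_singleton'.mp ha
    obtain ⟨b, hb⟩ := Ideal.mem_span_singleton'.mp ih
    obtain ⟨b', hb'⟩ := Ideal.mem_span_singleton'.mp (ht b)
    refine Ideal.mem_span_singleton'.mpr ⟨c * b', ?_⟩
    calc c * b' * t ^ (n + 1) = c * (b' * t) * t ^ n := by simp only [pow_succ', mul_assoc]
      _ = c * t * (b * t ^ n) := by rw [hb']; simp only [mul_assoc]
      _ = (c * t) ^ (n + 1) := by rw [hb, pow_succ']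

namespace MonoidAlgebra

theorem mapDomain_comp {R M N O : Type*} [Semiring R] (f : M → N) (g : N → O) (x : R[M]) :
    mapDomain (g ∘ f) x = mapDomain g (mapDomain f x) := by
  ext; simp [Finsupp.mapDomain_comp]

theorem mapDomain_surjective {R M N : Type*} [Semiring R] {f : M → N}
    (hf : Function.Surjective f) : Function.Surjective (mapDomain (R := R) f) := by
  intro y
  obtain ⟨g, hg⟩ := hf.hasRightInverse
  refine ⟨mapDomain g y, ?_⟩
  rw [← mapDomain_comp, hg.comp_eq_id]
  ext; simp

variable {k G : Type*} [Ring k] [Group G]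

theorem single_pow_sub_one_mem_span (σ : G) (m : ℕ) :
    single (σ ^ m) (1 : k) - 1 ∈ Ideal.span {single σ (1 : k) - 1} :=
  Ideal.mem_span_singleton'.mpr
    ⟨∑ i ∈ Finset.range m, single σ 1 ^ i, by rw [geom_sum_mul, single_pow, one_pow, one_def]⟩

theorem single_sub_one_mul_mem_span {σ : G} (hσ : ∀ g : G, g⁻¹ * σ * g ∈ Submonoid.powers σ)
    (a : k[G]) : (single σ 1 - 1) * a ∈ Ideal.span {single σ (1 : k) - 1} := by
  induction a using MonoidAlgebra.induction_linear with
  | zero => simp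
  | add x y hx hy => rw [mul_add]; exact add_mem hx hy
  | single g c =>
    obtain ⟨m, hm : σ ^ m = g⁻¹ * σ * g⟩ := hσ g
    have hgm : g * σ ^ m = σ * g := by rw [hm]; group
    have hconj : (single σ 1 - 1) * single g c = single g c * (single (σ ^ m) (1 : k) - 1) := by
      simp [sub_mul, mul_sub, single_mul_single, hgm]
    rw [hconj]
    exact Ideal.mul_mem_left _ _ (single_pow_sub_one_mem_span σ m)

theorem sub_mapDomain_out_mem_span {C : Subgroup G} {σ : G}
    (hC : ∀ τ ∈ C, τ ∈ Submonoid.powers σ) (x : k[G]) :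
    x - mapDomain (fun g : G => (g : G ⧸ C).out) x ∈ Ideal.span {single σ (1 : k) - 1} := by
  induction x using MonoidAlgebra.induction_linear with
  | zero => simp
  | add x y hx hy => rw [mapDomain_add, add_sub_add_comm]; exact add_mem hx hy
  | single g c =>
    obtain ⟨τ, hτ⟩ := QuotientGroup.mk_out_eq_mul C g
    obtain ⟨m, hm⟩ := hC _ (inv_mem τ.2)
    have hg : single g c - single (g : G ⧸ C).out c
        = single (g : G ⧸ C).out c * (single (σ ^ m) (1 : k) - 1) := by
      simp [mul_sub, single_mul_single, hm, hτ]
    rw [mapDomain_single, hg]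
    exact Ideal.mul_mem_left _ _ (single_pow_sub_one_mem_span σ m)

theorem mem_span_single_sub_one_of_mapDomain_eq_zero {C : Subgroup G} {σ : G}
    (hC : ∀ τ ∈ C, τ ∈ Submonoid.powers σ) {x : k[G]}
    (hx : mapDomain (QuotientGroup.mk : G → G ⧸ C) x = 0) :
    x ∈ Ideal.span {single σ (1 : k) - 1} := by
  have hout : mapDomain (fun g : G => (g : G ⧸ C).out) x = 0 := by
    rw [show (fun g : G => (g : G ⧸ C).out) = Quotient.out ∘ QuotientGroup.mk from rfl,
      mapDomain_comp, hx, mapDomain_zero]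
  simpa [hout] using sub_mapDomain_out_mem_span hC x

theorem exists_single_sub_one_pow_prime_pow_eq {p : ℕ} (hp : p.Prime) {σ : G} {n : ℕ}
    (hσ : σ ^ p ^ n = 1) : ∃ r, (single σ (1 : k) - 1) ^ p ^ n = p * r := by
  obtain ⟨r, hr⟩ := (Commute.one_right (single σ (1 : k) - 1)).exists_add_pow_prime_pow_eq hp n
  rw [sub_add_cancel, single_pow, one_pow, hσ, one_pow, ← one_def] at hr
  refine ⟨-((single σ 1 - 1) * r), ?_⟩
  rw [← sub_eq_zero, ← neg_eq_zero, ← sub_eq_zero.mpr hr]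
  noncomm_ring

theorem pow_mem_smul_top_of_mapDomain_eq_zero {S : Type*} [CommRing S] {p : ℕ} (hp : p.Prime)
    {I : Ideal S} (hpI : (p : S) ∈ I) {C : Subgroup G} [C.Normal] {σ : G} (hσC : σ ∈ C)
    (hC : ∀ τ ∈ C, τ ∈ Submonoid.powers σ) {n : ℕ} (hσ : σ ^ p ^ n = 1)
    {x : S[G]} (hx : mapDomain (QuotientGroup.mk : G → G ⧸ C) x = 0) :
    x ^ p ^ n ∈ I • (⊤ : Submodule S S[G]) := by
  have hconj (g : G) : g⁻¹ * σ * g ∈ Submonoid.powers σ :=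
    hC _ (by simpa using Subgroup.Normal.conj_mem ‹_› σ hσC g⁻¹)
  obtain ⟨b, hb⟩ := Ideal.mem_span_singleton'.mp <| Ideal.pow_mem_span_singleton_pow
    (single_sub_one_mul_mem_span hconj) (mem_span_single_sub_one_of_mapDomain_eq_zero hC hx)
    (p ^ n)
  obtain ⟨r, hr⟩ := exists_single_sub_one_pow_prime_pow_eq (k := S) hp hσ
  rw [← hb, hr, ← nsmul_eq_mul, mul_smul_comm, ← Nat.cast_smul_eq_nsmul S]
  exact Submodule.smul_mem_smul hpI trivial

end MonoidAlgebra

theorem units_map_surjective_of_quotient_by_normal_cyclic_pSubgroup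
    (p : ℕ) [Fact p.Prime] (S : Type) [CommRing S] [IsLocalRing S]
    (hp : (p : S) ∈ IsLocalRing.maximalIdeal S)
    (G : Type) [Group G] [Finite G]
    (C : Subgroup G) [C.Normal] (hCcyc : IsCyclic C) (hCp : IsPGroup p C) :
    Function.Surjective
      (Units.map (MonoidAlgebra.mapDomainRingHom S (QuotientGroup.mk' C)).toMonoidHom :
        (MonoidAlgebra S G)ˣ → (MonoidAlgebra S (G ⧸ C))ˣ) := by
  have := Module.Finite.isDedekindFiniteMonoid S (MonoidAlgebra S G)
  obtain ⟨γ, hγ⟩ := IsCyclic.exists_monoid_generator (α := C)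
  obtain ⟨n, hn⟩ := hCp γ
  have hC (τ : G) (hτ : τ ∈ C) : τ ∈ Submonoid.powers (γ : G) := by
    obtain ⟨m, hm⟩ := hγ ⟨τ, hτ⟩
    exact ⟨m, by simpa using congrArg Subtype.val hm⟩
  have hγn : (γ : G) ^ p ^ n = 1 := by simpa using congrArg Subtype.val hn
  intro u
  set f := mapDomainRingHom S (QuotientGroup.mk' C)
  have hf : Function.Surjective f := mapDomain_surjective (QuotientGroup.mk'_surjective C)
  obtain ⟨x, hx⟩ := hf u
  obtain ⟨y, hy⟩ := hf ↑u⁻¹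
  have hxy : f (1 - x * y) = 0 := by
    rw [map_sub, map_one, map_mul, hx, hy, Units.mul_inv, sub_self]
  have hunit : IsUnit (x * y) := by
    simpa using isUnit_one_sub_of_pow_mem_smul_top (IsLocalRing.maximalIdeal_le_jacobson ⊥)
      (pow_mem_smul_top_of_mapDomain_eq_zero Fact.out hp γ.2 hC hγn hxy)
  exact ⟨(isUnit_of_mul_isUnit_left hunit).unit, Units.ext hx⟩
end

section
/- Let κ be a p-closed algebraic extension of 𝔽_p, i.e. κ admits no field extension of degree p, and let R = W(κ) be its ring of Witt vectors, with φ the Frobenius endomorphism of R (the Witt vector functorial lift of x ↦ x^p). Then the sequence 0 → ℤ_p → R → R → 0 is exact, where the first map is the natural inclusion and the second map is 1 − φ; that is, 1 − φ : R → R is surjective with kernel exactly ℤ_p. -/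
/-!
Over a `p`-closed field `κ` the Artin–Schreier map `s ↦ s ^ p - s` is surjective: a root `t` of
`X ^ p - X - c` has conjugates `t + a` with `a ∈ 𝔽_p`, so if `[κ(t) : κ] = d` then the sum of the
conjugates, `d • t` plus an element of `𝔽_p`, lies in `κ`; as `d ≤ p` and `d ≠ p`, `d` is
invertible in `κ` and `t ∈ κ`.

Surjectivity of `1 - φ` on `W(κ)` follows by successive approximation: solving the equation on the
`0`-th coefficient with a Teichmüller representative leaves an error in the image of `V`, which
commutes with `φ`. The kernel is computed coefficientwise, since `φ` acts on Witt coordinates by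
`x ↦ x ^ p`, whose fixed points in `κ` form the prime field.
-/

open Function Polynomial

section ArtinSchreier

variable {p : ℕ} [hp : Fact p.Prime]

theorem mem_range_castHom_iff_pow_eq_self {K : Type*} [Field K] [CharP K p] {x : K} :
    x ∈ Set.range (ZMod.castHom dvd_rfl K) ↔ x ^ p = x := by
  rw [Set.mem_range, ← RingHom.mem_fieldRange, ZMod.fieldRange_castHom_eq_bot,
    Subfield.mem_bot_iff_pow_eq_self]

theorem sub_mem_range_castHom_of_pow_sub_eq {K : Type*} [Field K] [CharP K p] {r s : K}
    (h : r ^ p - r = s ^ p - s) : r - s ∈ Set.range (ZMod.castHom dvd_rfl K) := by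
  rw [mem_range_castHom_iff_pow_eq_self, sub_pow_char]
  linear_combination h

theorem natCast_natDegree_minpoly_mul_mem_fieldRange {κ K : Type*} [Field κ] [CharP κ p]
    [Field K] [CharP K p] [Algebra κ K] [IsAlgClosed K] {c : κ} {t : K}
    (ht : t ^ p - t = algebraMap κ K c) :
    ((minpoly κ t).natDegree : K) * t ∈ (algebraMap κ K).fieldRange := by
  have hroot : aeval t (X ^ p - X - C c) = 0 := by simp [ht]
  set M := (minpoly κ t).aroots K
  have hshift : ∀ r ∈ M, r - t ∈ (algebraMap κ K).fieldRange := by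
    intro r hr
    have hr' : aeval r (X ^ p - X - C c) = 0 := by
      obtain ⟨q, hq⟩ := minpoly.dvd κ t hroot
      rw [hq, map_mul, (mem_aroots.1 hr).2, zero_mul]
    simp only [map_sub, map_pow, aeval_X, aeval_C] at hr'
    obtain ⟨a, ha⟩ := sub_mem_range_castHom_of_pow_sub_eq (p := p)
      (by rw [ht, sub_eq_zero.1 hr'] : r ^ p - r = t ^ p - t)
    refine ⟨ZMod.castHom dvd_rfl κ a, ?_⟩
    rw [← ha, ← RingHom.comp_apply]
    exact congrArg (fun g : ZMod p →+* K => g a) (Subsingleton.elim _ _)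
  have hsum : M.sum ∈ (algebraMap κ K).fieldRange :=
    ⟨_, IntermediateField.AdjoinSimple.trace_gen_eq_sum_roots t (IsAlgClosed.splits _)⟩
  have hdecomp : ((minpoly κ t).natDegree : K) * t = M.sum - (M.map (· - t)).sum := by
    rw [Multiset.sum_map_sub, Multiset.map_id', Multiset.map_const', Multiset.sum_replicate,
      IsAlgClosed.card_aroots_eq_natDegree, nsmul_eq_mul]
    ring
  rw [hdecomp]
  refine sub_mem hsum (Subfield.multiset_sum_mem _ _ fun x hx => ?_)
  obtain ⟨r, hr, rfl⟩ := Multiset.mem_map.1 hx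
  exact hshift r hr

theorem exists_pow_sub_eq_of_forall_finrank_ne {κ : Type} [Field κ] [CharP κ p]
    (hpclosed : ∀ (κ' : Type) [Field κ'] [Algebra κ κ'], Module.finrank κ κ' ≠ p) (c : κ) :
    ∃ s : κ, s ^ p - s = c := by
  let K := AlgebraicClosure κ
  have : CharP K p := charP_of_injective_algebraMap (algebraMap κ K).injective p
  have hdeg : (X ^ p - X - C c : κ[X]).natDegree = p := by
    rw [natDegree_sub_C, FiniteField.X_pow_card_sub_X_natDegree_eq κ hp.out.one_lt]
  obtain ⟨t, hroot⟩ := IsAlgClosed.exists_aeval_eq_zero K (X ^ p - X - C c)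
    (degree_ne_of_natDegree_ne (hdeg ▸ hp.out.ne_zero))
  have ht : t ^ p - t = algebraMap κ K c := by
    simpa only [map_sub, map_pow, aeval_X, aeval_C, sub_eq_zero] using hroot
  have hint : IsIntegral κ t := Algebra.IsIntegral.isIntegral t
  set d := (minpoly κ t).natDegree
  have hdp : d < p := by
    refine lt_of_le_of_ne ?_ ?_
    · rw [← hdeg]
      exact natDegree_le_of_dvd (minpoly.dvd κ t hroot)
        (ne_zero_of_natDegree_gt (hdeg ▸ hp.out.pos))
    · have := hpclosed (IntermediateField.adjoin κ {t})
      rwa [IntermediateField.adjoin.finrank hint] at this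
  have hd : (d : κ) ≠ 0 := by
    rw [Ne, CharP.cast_eq_zero_iff κ p]
    exact Nat.not_dvd_of_pos_of_lt (minpoly.natDegree_pos hint) hdp
  obtain ⟨s, hs⟩ := natCast_natDegree_minpoly_mul_mem_fieldRange ht
  have hts : algebraMap κ K ((d : κ)⁻¹ * s) = t := by
    rw [map_mul, hs, map_inv₀, map_natCast,
      inv_mul_cancel_left₀ (by exact_mod_cast (map_ne_zero (algebraMap κ K)).2 hd)]
  refine ⟨(d : κ)⁻¹ * s, (algebraMap κ K).injective ?_⟩
  rw [map_sub, map_pow, hts, ht]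

theorem surjective_sub_frobenius_of_forall_finrank_ne {κ : Type} [Field κ] [CharP κ p]
    (hpclosed : ∀ (κ' : Type) [Field κ'] [Algebra κ κ'], Module.finrank κ κ' ≠ p) :
    Surjective fun t : κ => t - frobenius κ p t := fun c => by
  obtain ⟨s, hs⟩ := exists_pow_sub_eq_of_forall_finrank_ne hpclosed (-c)
  refine ⟨s, ?_⟩
  change s - frobenius κ p s = c
  rw [frobenius_def]
  linear_combination -hs

end ArtinSchreier

namespace WittVector

variable {p : ℕ} [Fact p.Prime] {R : Type*} [CommRing R]

local notation "𝕎" => WittVector p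

theorem eq_zero_of_forall_eq_verschiebung {v : ℕ → 𝕎 R}
    (h : ∀ k, v k = verschiebung (v (k + 1))) (k : ℕ) : v k = 0 := by
  ext n
  induction n generalizing k with
  | zero => rw [h, verschiebung_coeff_zero, zero_coeff]
  | succ n ih => rw [h, verschiebung_coeff_succ, ih, zero_coeff, zero_coeff]

theorem teichmuller_coeff_zero_add_verschiebung_shift (x : 𝕎 R) :
    teichmuller p (x.coeff 0) + verschiebung (x.shift 1) = x := by
  ext n
  rw [coeff_add_of_disjoint]
  · cases n with
    | zero => rw [teichmuller_coeff_zero, verschiebung_coeff_zero, add_zero]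
    | succ n => rw [teichmuller_coeff_pos p _ (n + 1) n.succ_pos, verschiebung_coeff_succ,
        shift_coeff, zero_add, add_comm]
  · rintro (_ | n)
    · exact Or.inr (verschiebung_coeff_zero _)
    · exact Or.inl (teichmuller_coeff_pos p _ (n + 1) n.succ_pos)

theorem exists_eq_teichmuller_sub_map_add_verschiebung (f : R →+* R)
    (hf : Surjective fun t => t - f t) (y : 𝕎 R) :
    ∃ t z, y = teichmuller p t - map f (teichmuller p t) + verschiebung z := by
  obtain ⟨t, ht⟩ := hf (y.coeff 0)
  have he : ∀ i < 1, (y - (teichmuller p t - map f (teichmuller p t))).coeff i = 0 := by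
    intro i hi
    rw [Nat.lt_one_iff.1 hi, ← constantCoeff_apply]
    simp only [map_sub, map_teichmuller, constantCoeff_apply, teichmuller_coeff_zero]
    exact sub_eq_zero.2 ht.symm
  refine ⟨t, (y - (teichmuller p t - map f (teichmuller p t))).shift 1, ?_⟩
  rw [← iterate_one verschiebung, ← eq_iterate_verschiebung he, add_sub_cancel]

theorem surjective_sub_map_of_surjective (f : R →+* R) (hf : Surjective fun t => t - f t) :
    Surjective fun x : 𝕎 R => x - map f x := by
  intro y
  choose t z hy using exists_eq_teichmuller_sub_map_add_verschiebung (p := p) f hf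
  obtain ⟨r, hr0, hrs⟩ : ∃ r : ℕ → 𝕎 R, r 0 = y ∧ ∀ k, r (k + 1) = z (r k) :=
    ⟨fun k => z^[k] y, rfl, fun k => iterate_succ_apply' z k y⟩
  obtain ⟨x, hxc⟩ : ∃ x : 𝕎 R, ∀ k, x.coeff k = t (r k) := ⟨mk p fun k => t (r k), fun _ => rfl⟩
  have hx (k : ℕ) : x.shift k = teichmuller p (t (r k)) + verschiebung (x.shift (k + 1)) := by
    conv_lhs => rw [← teichmuller_coeff_zero_add_verschiebung_shift (x.shift k)]
    rw [shift_coeff, add_zero, hxc]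
    congr 2
    ext i
    rw [shift_coeff, shift_coeff, shift_coeff, add_assoc, add_comm 1]
  -- `r k` is the error left after `k` approximation steps and `x` collects the digits `t (r k)`.
  have hdefect := eq_zero_of_forall_eq_verschiebung
    (v := fun k => r k - (x.shift k - map f (x.shift k))) (fun k => by
      rw [hy (r k), ← hrs, hx k, map_add, map_verschiebung, map_sub, map_sub]
      abel) 0
  have hshift0 : x.shift 0 = x := by
    ext i
    rw [shift_coeff, zero_add]
  rw [hshift0, hr0] at hdefect
  exact ⟨x, (sub_eq_zero.1 hdefect).symm⟩

theorem mem_range_map_iff {S : Type*} [CommRing S] (f : R →+* S) (x : 𝕎 S) :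
    x ∈ Set.range (map f) ↔ ∀ n, x.coeff n ∈ Set.range f := by
  refine ⟨by rintro ⟨y, rfl⟩ n; exact ⟨y.coeff n, (map_coeff f y n).symm⟩, fun h => ?_⟩
  choose y hy using h
  exact ⟨mk p y, by ext n; rw [map_coeff, coeff_mk, hy]⟩

theorem sub_map_frobenius_eq_zero_iff {κ : Type*} [Field κ] [CharP κ p] (x : 𝕎 κ) :
    x - map (_root_.frobenius κ p) x = 0 ↔ x ∈ Set.range (map (ZMod.castHom dvd_rfl κ)) := by
  simp only [sub_eq_zero, eq_comm (a := x), WittVector.ext_iff, mem_range_map_iff, map_coeff,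
    frobenius_def, mem_range_castHom_iff_pow_eq_self]

end WittVector

theorem wittVector_one_sub_frobenius_exact_general
    (p : ℕ) [Fact p.Prime]
    (κ : Type) [Field κ] [CharP κ p]
    (hpclosed : ∀ (κ' : Type) [Field κ'] [Algebra κ κ'], Module.finrank κ κ' ≠ p) :
    Function.Injective
        ((WittVector.map (ZMod.castHom dvd_rfl κ)).comp
          ((WittVector.equiv p).symm : ℤ_[p] →+* WittVector p (ZMod p))) ∧
      Function.Surjective
        (fun x : WittVector p κ => x - WittVector.map (frobenius κ p) x) ∧
      ∀ x : WittVector p κ,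
        x - WittVector.map (frobenius κ p) x = 0 ↔
          x ∈ Set.range ((WittVector.map (ZMod.castHom dvd_rfl κ)).comp
            ((WittVector.equiv p).symm : ℤ_[p] →+* WittVector p (ZMod p))) := by
  have hrange : Set.range ((WittVector.map (ZMod.castHom dvd_rfl κ)).comp
      ((WittVector.equiv p).symm : ℤ_[p] →+* WittVector p (ZMod p))) =
      Set.range (WittVector.map (ZMod.castHom dvd_rfl κ)) := by
    rw [RingHom.coe_comp]
    exact (WittVector.equiv p).symm.surjective.range_comp _
  refine ⟨?_, WittVector.surjective_sub_map_of_surjective _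
    (surjective_sub_frobenius_of_forall_finrank_ne hpclosed), fun x => ?_⟩
  · rw [RingHom.coe_comp]
    exact (WittVector.map_injective _ (ZMod.castHom dvd_rfl κ).injective).comp
      (WittVector.equiv p).symm.injective
  · rw [hrange]
    exact WittVector.sub_map_frobenius_eq_zero_iff x

theorem wittVector_one_sub_frobenius_exact
    (p : ℕ) [Fact p.Prime]
    (κ : Type) [Field κ] [CharP κ p] [Algebra (ZMod p) κ] [Algebra.IsAlgebraic (ZMod p) κ]
    (hpclosed : ∀ (κ' : Type) [Field κ'] [Algebra κ κ'], Module.finrank κ κ' ≠ p) :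
    Function.Injective
        ((WittVector.map (ZMod.castHom dvd_rfl κ)).comp
          ((WittVector.equiv p).symm : ℤ_[p] →+* WittVector p (ZMod p))) ∧
      Function.Surjective
        (fun x : WittVector p κ => x - WittVector.map (frobenius κ p) x) ∧
      ∀ x : WittVector p κ,
        x - WittVector.map (frobenius κ p) x = 0 ↔
          x ∈ Set.range ((WittVector.map (ZMod.castHom dvd_rfl κ)).comp
            ((WittVector.equiv p).symm : ℤ_[p] →+* WittVector p (ZMod p))) :=
  wittVector_one_sub_frobenius_exact_general p κ hpclosed
end
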